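/- Let Γ and Δ be finite simple graphs, and set A₀ = I, A₁ = A(Γ), A₂ = J − I − A(Γ) (matrices indexed by V(Γ)) and B₀ = I, B₁ = A(Δ), B₂ = J − I − A(Δ) (indexed by V(Δ)). Fix s_{ij} ∈ {0,1} for i, j ∈ {0,1,2} with s₀₀ = 0, and let Γ ⋆ Δ be the graph on V(Γ) × V(Δ) with adjacency matrix Σ_{i,j} s_{ij} (A_i ⊗ B_j). Suppose π = {C₁, …, C_t} is an equitable partition of Γ with characteristic matrix S and quotient matrix R. Then A(Γ ⋆ Δ)(S ⊗ I) = (S ⊗ I) · Σ_{j=0}^{2} ( s_{0j} (I ⊗ B_j) + s_{1j} (R ⊗ B_j) + s_{2j} ((M − I − R) ⊗ B_j) ), where M is the t × t matrix with M_{ij} = |C_j|. -/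

import Mathlib

open Classical Matrix Kronecker

/-- The number of neighbors of `x` inside the set `c`. -/
noncomputable def nbrCount {V : Type*} (G : SimpleGraph V) (x : V) (c : Finset V) : ℕ :=
  (c.filter fun y => G.Adj x y).card

/-- `{C i} ∪ {D}` is a partition of the vertex set (all cells nonempty, pairwise
disjoint, covering). -/
def IsPartitionWithCell {V ι : Type*} (C : ι → Finset V) (D : Finset V) : Prop :=
  (∀ i, (C i).Nonempty) ∧ D.Nonempty ∧
    Pairwise (fun i j => Disjoint (C i) (C j)) ∧
    (∀ i, Disjoint (C i) D) ∧ ∀ x : V, x ∈ D ∨ ∃ i, x ∈ C i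

/-- The family of cells `C` is equitable for `G` : any two vertices of a cell `C i`
have the same number of neighbors in each cell `C j`. -/
def IsEquitableOn {V ι : Type*} (G : SimpleGraph V) (C : ι → Finset V) : Prop :=
  ∀ i j, ∀ x ∈ C i, ∀ y ∈ C i, nbrCount G x (C j) = nbrCount G y (C j)

/-- Every vertex of `D` has `0`, `|C i|/2` or `|C i|` neighbors in each cell `C i`. -/
def GMhalf {V ι : Type*} (G : SimpleGraph V) (C : ι → Finset V) (D : Finset V) : Prop :=
  ∀ x ∈ D, ∀ i, nbrCount G x (C i) = 0 ∨ 2 * nbrCount G x (C i) = (C i).card ∨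
    nbrCount G x (C i) = (C i).card

/-- `π = {C₁, …, C_t, D}` is a Godsil–McKay partition of `G` with Godsil–McKay cell `D`. -/
def IsGMPartition {V ι : Type*} (G : SimpleGraph V) (C : ι → Finset V) (D : Finset V) : Prop :=
  IsPartitionWithCell C D ∧ IsEquitableOn G C ∧ GMhalf G C D

/-- The graph obtained from `G` by Godsil–McKay switching with respect to the
partition `{C₁, …, C_t, D}` : adjacency and nonadjacency between `x ∈ D` and the
vertices of `C i` are interchanged whenever `x` has exactly `|C i|/2` neighbors in `C i`. -/
def GMswitch {V ι : Type*} (G : SimpleGraph V) (C : ι → Finset V) (D : Finset V) :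
    SimpleGraph V where
  Adj x y := x ≠ y ∧ Xor' (G.Adj x y)
    (∃ i, (x ∈ D ∧ y ∈ C i ∧ 2 * nbrCount G x (C i) = (C i).card) ∨
          (y ∈ D ∧ x ∈ C i ∧ 2 * nbrCount G y (C i) = (C i).card))
  symm := by
    refine ⟨?_⟩
    rintro x y ⟨hne, h⟩
    refine ⟨hne.symm, ?_⟩
    have h1 : (G.Adj y x) = (G.Adj x y) := propext (G.adj_comm y x)
    have h2 : (∃ i, (y ∈ D ∧ x ∈ C i ∧ 2 * nbrCount G y (C i) = (C i).card) ∨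
          (x ∈ D ∧ y ∈ C i ∧ 2 * nbrCount G x (C i) = (C i).card)) =
        (∃ i, (x ∈ D ∧ y ∈ C i ∧ 2 * nbrCount G x (C i) = (C i).card) ∨
          (y ∈ D ∧ x ∈ C i ∧ 2 * nbrCount G y (C i) = (C i).card)) :=
      propext (exists_congr fun i => or_comm)
    rw [h1, h2]
    exact h
  loopless := by refine ⟨?_⟩; rintro x ⟨hne, -⟩; exact hne rfl

/-- The adjacency matrix of a graph, with rational entries. -/
noncomputable def adjM {V : Type*} (G : SimpleGraph V) : Matrix V V ℚ :=
  Matrix.of fun x y => if G.Adj x y then 1 else 0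

/-- The all-one matrix. -/
def allOnes (V : Type*) : Matrix V V ℚ := Matrix.of fun _ _ => 1

/-- The switching matrix `Q` of the partition `{C₁, …, C_t, D}` :
`Q x y = 2/|C i| - δ_{x y}` if `x, y ∈ C i`, `Q x y = δ_{x y}` if `x, y ∈ D`,
and `Q x y = 0` otherwise. -/
noncomputable def switchMatrix {V ι : Type*} (C : ι → Finset V) (D : Finset V) :
    Matrix V V ℚ :=
  Matrix.of fun x y =>
    if h : ∃ i, x ∈ C i ∧ y ∈ C i then
      2 / ((C h.choose).card : ℚ) - (if x = y then 1 else 0)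
    else if x ∈ D ∧ y ∈ D then (if x = y then 1 else 0) else 0

/-- The characteristic matrix of a family of cells: `S x i = 1` iff `x ∈ C i`. -/
noncomputable def charMat {V ι : Type*} (C : ι → Finset V) : Matrix V ι ℚ :=
  Matrix.of fun x i => if x ∈ C i then 1 else 0

/-- `A₀ = I`, `A₁ = A(G)`, `A₂ = J - I - A(G)`. -/
noncomputable def stdMats {V : Type*} [DecidableEq V] (G : SimpleGraph V) :
    Fin 3 → Matrix V V ℚ :=
  ![1, adjM G, allOnes V - 1 - adjM G]

/-- The three basic relations: `i = 0` : equality, `i = 1` : adjacency,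
`i = 2` : distinct nonadjacency. -/
def relOfIdx {V : Type*} (G : SimpleGraph V) (i : Fin 3) (x y : V) : Prop :=
  (i = 0 ∧ x = y) ∨ (i = 1 ∧ G.Adj x y) ∨ (i = 2 ∧ x ≠ y ∧ ¬ G.Adj x y)

lemma relOfIdx_symm {V : Type*} {G : SimpleGraph V} {i : Fin 3} {x y : V}
    (h : relOfIdx G i x y) : relOfIdx G i y x := by
  rcases h with ⟨hi, h⟩ | ⟨hi, h⟩ | ⟨hi, h1, h2⟩
  · exact Or.inl ⟨hi, h.symm⟩
  · exact Or.inr (Or.inl ⟨hi, h.symm⟩)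
  · exact Or.inr (Or.inr ⟨hi, h1.symm, fun hadj => h2 hadj.symm⟩)

/-- The unified graph product of type `[0 s₀₁ s₀₂; s₁₀ s₁₁ s₁₂; s₂₀ s₂₁ s₂₂]` :
the graph on `V × W` whose adjacency matrix is `Σ_{i,j} s i j • (A_i ⊗ B_j)`. -/
def unifiedProd {V W : Type*} (G : SimpleGraph V) (H : SimpleGraph W)
    (s : Fin 3 → Fin 3 → ℚ) : SimpleGraph (V × W) where
  Adj p q := p ≠ q ∧ ∃ i j, s i j = 1 ∧ relOfIdx G i p.1 q.1 ∧ relOfIdx H j p.2 q.2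
  symm := by
    refine ⟨?_⟩
    rintro p q ⟨hne, i, j, hs, hi, hj⟩
    exact ⟨hne.symm, i, j, hs, relOfIdx_symm hi, relOfIdx_symm hj⟩
  loopless := by refine ⟨?_⟩; rintro p ⟨hne, -⟩; exact hne rfl

section KroneckerIntertwining

variable {α m n p κ κ' : Type*} [CommSemiring α] [Fintype m] [Fintype n] [Fintype p]
  [DecidableEq n] [Fintype κ] [Fintype κ']

lemma kronecker_mul_kronecker_one_eq {A : Matrix m m α} {S : Matrix m p α}
    {Q : Matrix p p α} (h : A * S = S * Q) (B : Matrix n n α) :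
    (A ⊗ₖ B) * (S ⊗ₖ (1 : Matrix n n α)) = (S ⊗ₖ (1 : Matrix n n α)) * (Q ⊗ₖ B) := by
  rw [← mul_kronecker_mul, ← mul_kronecker_mul, h, Matrix.mul_one, Matrix.one_mul]

lemma sum_smul_kronecker_mul_kronecker_one_eq {A : κ → Matrix m m α} {S : Matrix m p α}
    {Q : κ → Matrix p p α} (h : ∀ i, A i * S = S * Q i) (B : κ' → Matrix n n α)
    (c : κ → κ' → α) :
    (∑ i, ∑ j, c i j • (A i ⊗ₖ B j)) * (S ⊗ₖ (1 : Matrix n n α))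
      = (S ⊗ₖ (1 : Matrix n n α)) * ∑ i, ∑ j, c i j • (Q i ⊗ₖ B j) := by
  simp only [Matrix.sum_mul, Matrix.mul_sum, Matrix.smul_mul, Matrix.mul_smul,
    kronecker_mul_kronecker_one_eq (h _)]

end KroneckerIntertwining

lemma allOnes_mul_charMat {V ι : Type*} [Fintype V] [Fintype ι] {C : ι → Finset V}
    (hdisj : Pairwise fun i j => Disjoint (C i) (C j)) (hcover : ∀ x : V, ∃ i, x ∈ C i) :
    allOnes V * charMat C
      = charMat C * (Matrix.of fun _ k => ((C k).card : ℚ) : Matrix ι ι ℚ) := by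
  ext x k
  obtain ⟨i, hi⟩ := hcover x
  have hcell : ∀ l, x ∈ C l ↔ l = i := fun l =>
    ⟨fun hl => by_contra fun hne => Finset.disjoint_left.mp (hdisj hne) hl hi,
      fun hl => hl ▸ hi⟩
  simp [Matrix.mul_apply, allOnes, charMat, hcell]

lemma stdMats_mul_charMat {V ι : Type*} [Fintype V] [DecidableEq V] [Fintype ι]
    [DecidableEq ι] {G : SimpleGraph V} {C : ι → Finset V}
    (hdisj : Pairwise fun i j => Disjoint (C i) (C j)) (hcover : ∀ x : V, ∃ i, x ∈ C i)
    {R : Matrix ι ι ℚ} (hR : adjM G * charMat C = charMat C * R) (i : Fin 3) :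
    stdMats G i * charMat C
      = charMat C *
          ![1, R, (Matrix.of fun _ k => ((C k).card : ℚ) : Matrix ι ι ℚ) - 1 - R] i := by
  fin_cases i
  · simp [stdMats]
  · simpa [stdMats] using hR
  · simp only [stdMats, Fin.reduceFinMk, Matrix.cons_val, Matrix.sub_mul, Matrix.mul_sub,
      allOnes_mul_charMat hdisj hcover, hR, Matrix.one_mul, Matrix.mul_one]

theorem unifiedProd_charMat_eq_general {V W : Type*} [Fintype V] [DecidableEq V]
    [Fintype W] [DecidableEq W] (G : SimpleGraph V) (H : SimpleGraph W)
    (s : Fin 3 → Fin 3 → ℚ)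
    {t : ℕ} (C : Fin t → Finset V)
    (hdisj : Pairwise fun i j => Disjoint (C i) (C j))
    (hcover : ∀ x : V, ∃ i, x ∈ C i)
    (R : Matrix (Fin t) (Fin t) ℚ)
    (hR : adjM G * charMat C = charMat C * R) :
    (∑ i : Fin 3, ∑ j : Fin 3, s i j • (stdMats G i ⊗ₖ stdMats H j))
        * (charMat C ⊗ₖ (1 : Matrix W W ℚ))
      = (charMat C ⊗ₖ (1 : Matrix W W ℚ)) *
          ∑ j : Fin 3,
            (s 0 j • ((1 : Matrix (Fin t) (Fin t) ℚ) ⊗ₖ stdMats H j)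
              + s 1 j • (R ⊗ₖ stdMats H j)
              + s 2 j • ((Matrix.of (fun _ k : Fin t => ((C k).card : ℚ)) - 1 - R)
                  ⊗ₖ stdMats H j)) := by
  rw [sum_smul_kronecker_mul_kronecker_one_eq (stdMats_mul_charMat hdisj hcover hR),
    Finset.sum_comm]
  simp only [Fin.sum_univ_three, Matrix.cons_val]

/-- the computation `A(Γ ⋆ Δ)(S ⊗ I) = (S ⊗ I)(Σ_j (s₀ⱼ (I ⊗ Bⱼ)
+ s₁ⱼ (R ⊗ Bⱼ) + s₂ⱼ ((M - I - R) ⊗ Bⱼ)))`. -/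
theorem unifiedProd_charMat_eq {V W : Type*} [Fintype V] [DecidableEq V]
    [Fintype W] [DecidableEq W] (G : SimpleGraph V) (H : SimpleGraph W)
    (s : Fin 3 → Fin 3 → ℚ) (hs : ∀ i j, s i j = 0 ∨ s i j = 1) (hs00 : s 0 0 = 0)
    {t : ℕ} (C : Fin t → Finset V)
    (hne : ∀ i, (C i).Nonempty)
    (hdisj : Pairwise fun i j => Disjoint (C i) (C j))
    (hcover : ∀ x : V, ∃ i, x ∈ C i)
    (R : Matrix (Fin t) (Fin t) ℚ)
    (hR : adjM G * charMat C = charMat C * R) :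
    (∑ i : Fin 3, ∑ j : Fin 3, s i j • (stdMats G i ⊗ₖ stdMats H j))
        * (charMat C ⊗ₖ (1 : Matrix W W ℚ))
      = (charMat C ⊗ₖ (1 : Matrix W W ℚ)) *
          ∑ j : Fin 3,
            (s 0 j • ((1 : Matrix (Fin t) (Fin t) ℚ) ⊗ₖ stdMats H j)
              + s 1 j • (R ⊗ₖ stdMats H j)
              + s 2 j • ((Matrix.of (fun _ k : Fin t => ((C k).card : ℚ)) - 1 - R)
                  ⊗ₖ stdMats H j)) :=
  unifiedProd_charMat_eq_general G H s C hdisj hcover R hR
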